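/- Let E be a pseudo effect algebra satisfying (RDP). Then the group J(E) of all Jordan signed measures on E, ordered by ≤⁺, is an abelian Dedekind complete lattice-ordered group: every nonempty subset of J(E) that is bounded above has a supremum in J(E), and every nonempty subset bounded below has an infimum in J(E). -/

import Mathlib

/-- A pseudo effect algebra: a partial algebra `(E; +, 0, 1)` where the partial
addition is encoded as `padd : E → E → Option E` (`padd a b = some c` means
`a + b` is defined and equals `c`). -/
class PseudoEffectAlgebra (E : Type) where
  padd : E → E → Option E
  pzero : E
  pone : E
  /-- (i) `a+b` and `(a+b)+c` exist iff `b+c` and `a+(b+c)` exist ... -/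
  assoc_defined : ∀ a b c : E,
    (∃ x, padd a b = some x ∧ (padd x c).isSome) ↔
      (∃ y, padd b c = some y ∧ (padd a y).isSome)
  /-- ... and in this case `(a+b)+c = a+(b+c)`. -/
  assoc_eq : ∀ a b c x y : E, padd a b = some x → padd b c = some y →
    padd x c = padd a y
  /-- (ii) there is exactly one `d` with `a + d = 1`. -/
  exists_unique_right : ∀ a : E, ∃! d, padd a d = some pone
  /-- (ii) there is exactly one `e` with `e + a = 1`. -/
  exists_unique_left : ∀ a : E, ∃! e, padd e a = some pone
  /-- (iii) if `a+b` exists, there are `d, e` with `a+b = d+a = b+e`. -/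
  shift : ∀ a b c : E, padd a b = some c →
    ∃ d e, padd d a = some c ∧ padd b e = some c
  /-- (iv) if `1+a` exists then `a = 0`. -/
  one_add : ∀ a : E, (padd pone a).isSome → a = pzero
  /-- (iv) if `a+1` exists then `a = 0`. -/
  add_one : ∀ a : E, (padd a pone).isSome → a = pzero

namespace PseudoEffectAlgebra

variable {E : Type} [PseudoEffectAlgebra E]

/-- The induced partial order: `a ≤ b` iff `b = a + c` for some `c ∈ E`. -/
def pLe (a b : E) : Prop := ∃ c, padd a c = some b

/-- The Riesz Decomposition Property (RDP). -/
def RDP (E : Type) [PseudoEffectAlgebra E] : Prop :=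
  ∀ a₁ a₂ b₁ b₂ c : E, padd a₁ a₂ = some c → padd b₁ b₂ = some c →
    ∃ d₁ d₂ d₃ d₄ : E, padd d₁ d₂ = some a₁ ∧ padd d₃ d₄ = some a₂ ∧
      padd d₁ d₃ = some b₁ ∧ padd d₂ d₄ = some b₂

/-- A signed measure on `E`. -/
def IsSignedMeasure (m : E → ℝ) : Prop :=
  ∀ a b c : E, padd a b = some c → m c = m a + m b

/-- A (positive) measure on `E`. -/
def IsMeasure (m : E → ℝ) : Prop :=
  IsSignedMeasure m ∧ ∀ a : E, 0 ≤ m a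

/-- A state on `E`. -/
def IsState (s : E → ℝ) : Prop := IsMeasure s ∧ s pone = 1

/-- A Jordan signed measure: a difference of two measures. -/
def IsJordan (m : E → ℝ) : Prop :=
  ∃ m₁ m₂ : E → ℝ, IsMeasure m₁ ∧ IsMeasure m₂ ∧ m = m₁ - m₂

/-- `m ≤⁺ m'` iff `m' - m` is a (positive) measure. -/
def MLe (m m' : E → ℝ) : Prop := IsMeasure (m' - m)

/-- The (partial) sum `x₁ + ⋯ + xₙ` of a nonempty list of elements of `E`. -/
def lsum : List E → Option E
  | [] => some pzero
  | [a] => some a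
  | a :: b :: l => (lsum (b :: l)).bind (fun s => padd a s)

/-- `m` is the supremum, in the po-group `J(E)` of Jordan signed measures ordered
by `≤⁺`, of the set `S`. -/
def IsSupIn (S : Set (E → ℝ)) (m : E → ℝ) : Prop :=
  IsJordan m ∧ (∀ t ∈ S, MLe t m) ∧
    ∀ h : E → ℝ, IsJordan h → (∀ t ∈ S, MLe t h) → MLe m h

/-- `m` is the infimum, in the po-group `J(E)` of Jordan signed measures ordered
by `≤⁺`, of the set `S`. -/
def IsInfIn (S : Set (E → ℝ)) (m : E → ℝ) : Prop :=
  IsJordan m ∧ (∀ t ∈ S, MLe m t) ∧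
    ∀ h : E → ℝ, IsJordan h → (∀ t ∈ S, MLe h t) → MLe h m

/-! The supremum of a bounded set `S` of Jordan signed measures is given by the
Riesz–Kantorovich formula `v a = sup (t₁ a₁ + ⋯ + tₙ aₙ)`, the supremum running over all
decompositions `a = a₁ + ⋯ + aₙ` and all `tᵢ ∈ S`; an upper bound of `S` bounds these sums.
Concatenating decompositions shows `v a + v b ≤ v (a + b)`, and the Riesz Decomposition
Property refines every decomposition of `a + b` into one of `a` and one of `b`, giving the
reverse inequality. So `v` is a signed measure, `v - t` is a measure for `t ∈ S`, whence `v` is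
Jordan, and it is below every upper bound. Infima are suprema of the negated set. -/

open Pointwise

lemma padd_assoc_right {a b c x z : E} (hab : padd a b = some x) (hxc : padd x c = some z) :
    ∃ y, padd b c = some y ∧ padd a y = some z := by
  obtain ⟨y, hbc, -⟩ := (assoc_defined a b c).mp ⟨x, hab, by simp [hxc]⟩
  exact ⟨y, hbc, by rw [← assoc_eq a b c x y hab hbc, hxc]⟩

section lsum

lemma lsum_cons_eq_some {L : List E} (hL : L ≠ []) {a c : E} :
    lsum (a :: L) = some c ↔ ∃ s, lsum L = some s ∧ padd a s = some c := by
  cases L with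
  | nil => exact absurd rfl hL
  | cons b l => simp only [lsum, Option.bind_eq_some_iff]

lemma lsum_append {L₁ L₂ : List E} (h₁ : L₁ ≠ []) (h₂ : L₂ ≠ []) {a b c : E}
    (ha : lsum L₁ = some a) (hb : lsum L₂ = some b) (hab : padd a b = some c) :
    lsum (L₁ ++ L₂) = some c := by
  induction L₁ generalizing a c with
  | nil => exact absurd rfl h₁
  | cons x L ih =>
    rcases eq_or_ne L [] with rfl | hL
    · cases ha
      exact (lsum_cons_eq_some h₂).2 ⟨b, hb, hab⟩
    · obtain ⟨s, hs, hxs⟩ := (lsum_cons_eq_some hL).1 ha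
      obtain ⟨y, hsb, hxy⟩ := padd_assoc_right hxs hab
      exact (lsum_cons_eq_some (by simp [hL])).2 ⟨y, ih hL hs hsb, hxy⟩

end lsum

section Measures

lemma IsSignedMeasure.add {m m' : E → ℝ} (hm : IsSignedMeasure m) (hm' : IsSignedMeasure m') :
    IsSignedMeasure (m + m') := fun a b c h => by
  simp only [Pi.add_apply, hm a b c h, hm' a b c h]; ring

lemma IsSignedMeasure.neg {m : E → ℝ} (hm : IsSignedMeasure m) : IsSignedMeasure (-m) :=
  fun a b c h => by simp only [Pi.neg_apply, hm a b c h]; ring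

lemma IsSignedMeasure.sub {m m' : E → ℝ} (hm : IsSignedMeasure m) (hm' : IsSignedMeasure m') :
    IsSignedMeasure (m - m') := sub_eq_add_neg m m' ▸ hm.add hm'.neg

lemma IsSignedMeasure.sum_map_of_lsum {m : E → ℝ} (hm : IsSignedMeasure m) {L : List E}
    (hL : L ≠ []) {a : E} (ha : lsum L = some a) : (L.map m).sum = m a := by
  induction L generalizing a with
  | nil => exact absurd rfl hL
  | cons x L ih =>
    rcases eq_or_ne L [] with rfl | hL'
    · cases ha; simp
    · obtain ⟨s, hs, hxs⟩ := (lsum_cons_eq_some hL').1 ha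
      rw [List.map_cons, List.sum_cons, ih hL' hs, hm x s a hxs]

lemma IsMeasure.zero : IsMeasure (0 : E → ℝ) :=
  ⟨fun _ _ _ _ => by simp, fun _ => le_rfl⟩

lemma IsMeasure.add {m m' : E → ℝ} (hm : IsMeasure m) (hm' : IsMeasure m') :
    IsMeasure (m + m') :=
  ⟨hm.1.add hm'.1, fun a => add_nonneg (hm.2 a) (hm'.2 a)⟩

lemma IsMeasure.isJordan {m : E → ℝ} (hm : IsMeasure m) : IsJordan m :=
  ⟨m, 0, hm, IsMeasure.zero, (sub_zero m).symm⟩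

lemma IsJordan.isSignedMeasure {m : E → ℝ} (hm : IsJordan m) : IsSignedMeasure m := by
  obtain ⟨p, n, hp, hn, rfl⟩ := hm
  exact hp.1.sub hn.1

lemma IsJordan.add {m m' : E → ℝ} (hm : IsJordan m) (hm' : IsJordan m') :
    IsJordan (m + m') := by
  obtain ⟨p, n, hp, hn, rfl⟩ := hm
  obtain ⟨p', n', hp', hn', rfl⟩ := hm'
  exact ⟨p + p', n + n', hp.add hp', hn.add hn', by abel⟩

lemma IsJordan.neg {m : E → ℝ} (hm : IsJordan m) : IsJordan (-m) := by
  obtain ⟨p, n, hp, hn, rfl⟩ := hm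
  exact ⟨n, p, hn, hp, neg_sub p n⟩

lemma MLe.le {m m' : E → ℝ} (h : MLe m m') (a : E) : m a ≤ m' a :=
  sub_nonneg.1 (h.2 a)

lemma mLe_of_le {m m' : E → ℝ} (hm : IsSignedMeasure m) (hm' : IsSignedMeasure m')
    (h : ∀ a, m a ≤ m' a) : MLe m m' :=
  ⟨hm'.sub hm, fun a => sub_nonneg.2 (h a)⟩

lemma MLe.trans {m₁ m₂ m₃ : E → ℝ} (h₁₂ : MLe m₁ m₂) (h₂₃ : MLe m₂ m₃) : MLe m₁ m₃ := by
  rw [MLe, ← sub_add_sub_cancel m₃ m₂ m₁]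
  exact h₂₃.add h₁₂

lemma mLe_add_left {m m' : E → ℝ} (hm' : IsMeasure m') : MLe m (m' + m) := by
  rwa [MLe, add_sub_cancel_right]

lemma mLe_add_right {m m' : E → ℝ} (hm' : IsMeasure m') : MLe m (m + m') := by
  rwa [MLe, add_sub_cancel_left]

lemma mLe_neg_left {m m' : E → ℝ} : MLe (-m) m' ↔ MLe (-m') m := by
  rw [MLe, MLe, sub_neg_eq_add, sub_neg_eq_add, add_comm]

lemma mLe_neg_right {m m' : E → ℝ} : MLe m (-m') ↔ MLe m' (-m) := by
  rw [MLe, MLe, neg_sub_comm]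

lemma IsJordan.exists_isMeasure_mLe {m : E → ℝ} (hm : IsJordan m) :
    ∃ p, IsMeasure p ∧ MLe m p := by
  obtain ⟨p, n, hp, hn, rfl⟩ := hm
  exact ⟨p, hp, by rwa [MLe, sub_sub_cancel]⟩

end Measures

section Supremum

def evalSum (P : List ((E → ℝ) × E)) : ℝ := (P.map fun p => p.1 p.2).sum

def decompSums (S : Set (E → ℝ)) (a : E) : Set ℝ :=
  {r | ∃ P : List ((E → ℝ) × E), P ≠ [] ∧ (∀ p ∈ P, p.1 ∈ S) ∧
    lsum (P.map Prod.snd) = some a ∧ evalSum P = r}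

noncomputable def supMeasure (S : Set (E → ℝ)) (a : E) : ℝ := sSup (decompSums S a)

lemma exists_refinement (hRDP : RDP E) {P : List ((E → ℝ) × E)} (hP : P ≠ [])
    (hPS : ∀ p ∈ P, IsSignedMeasure p.1) {a b c : E}
    (hc : lsum (P.map Prod.snd) = some c) (hab : padd a b = some c) :
    ∃ Q R : List ((E → ℝ) × E), Q.map Prod.fst = P.map Prod.fst ∧
      R.map Prod.fst = P.map Prod.fst ∧ lsum (Q.map Prod.snd) = some a ∧
      lsum (R.map Prod.snd) = some b ∧ evalSum P = evalSum Q + evalSum R := by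
  induction P generalizing a b c with
  | nil => exact absurd rfl hP
  | cons p P ih =>
    obtain ⟨t, x⟩ := p
    have ht : IsSignedMeasure t := hPS (t, x) List.mem_cons_self
    rcases eq_or_ne P [] with rfl | hP'
    · cases hc
      exact ⟨[(t, a)], [(t, b)], rfl, rfl, rfl, rfl, by simp [evalSum, ht a b x hab]⟩
    · obtain ⟨s, hs, hxs⟩ := (lsum_cons_eq_some (by simpa using hP')).1 hc
      obtain ⟨d₁, d₂, d₃, d₄, h₁₂, h₃₄, h₁₃, h₂₄⟩ := hRDP a b x s c hab hxs
      obtain ⟨Q, R, hQ, hR, hQs, hRs, hsum⟩ :=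
        ih hP' (fun q hq => hPS q (List.mem_cons_of_mem _ hq)) hs h₂₄
      have map_snd_ne_nil : ∀ {L : List ((E → ℝ) × E)}, L.map Prod.fst = P.map Prod.fst →
          L.map Prod.snd ≠ [] := fun hL h =>
        hP' (List.map_eq_nil_iff.1 (by rw [← hL, List.map_eq_nil_iff.1 h, List.map_nil]))
      refine ⟨(t, d₁) :: Q, (t, d₃) :: R, by simp [hQ], by simp [hR],
        (lsum_cons_eq_some (map_snd_ne_nil hQ)).2 ⟨d₂, hQs, h₁₂⟩,
        (lsum_cons_eq_some (map_snd_ne_nil hR)).2 ⟨d₄, hRs, h₃₄⟩, ?_⟩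
      simp only [evalSum, List.map_cons, List.sum_cons] at hsum ⊢
      rw [hsum, ht d₁ d₃ x h₁₃]
      ring

lemma apply_mem_decompSums {S : Set (E → ℝ)} {t : E → ℝ} (ht : t ∈ S) (a : E) :
    t a ∈ decompSums S a :=
  ⟨[(t, a)], List.cons_ne_nil _ _, by simpa using ht, rfl, by simp [evalSum]⟩

lemma le_of_mem_decompSums {S : Set (E → ℝ)} {g : E → ℝ} (hg : IsSignedMeasure g)
    (hSg : ∀ t ∈ S, MLe t g) {a : E} {r : ℝ} (hr : r ∈ decompSums S a) : r ≤ g a := by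
  obtain ⟨P, hP, hPS, ha, rfl⟩ := hr
  calc evalSum P ≤ (P.map fun p => g p.2).sum :=
        List.sum_le_sum fun p hp => (hSg p.1 (hPS p hp)).le p.2
    _ = g a := by
        rw [← hg.sum_map_of_lsum (by simpa using hP) ha, List.map_map]
        rfl

lemma decompSums_eq_add (hRDP : RDP E) {S : Set (E → ℝ)} (hS : ∀ t ∈ S, IsSignedMeasure t)
    {a b c : E} (hab : padd a b = some c) :
    decompSums S c = decompSums S a + decompSums S b := by
  ext r
  constructor
  · rintro ⟨P, hP, hPS, hc, rfl⟩
    obtain ⟨Q, R, hQ, hR, hQa, hRb, hsum⟩ :=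
      exists_refinement hRDP hP (fun p hp => hS p.1 (hPS p hp)) hc hab
    have mem_S {L : List ((E → ℝ) × E)} (hL : L.map Prod.fst = P.map Prod.fst) :
        ∀ q ∈ L, q.1 ∈ S := fun q hq => by
      obtain ⟨p, hp, hpq⟩ := List.mem_map.1 (hL ▸ List.mem_map_of_mem (f := Prod.fst) hq)
      exact hpq ▸ hPS p hp
    have ne_nil {L : List ((E → ℝ) × E)} (hL : L.map Prod.fst = P.map Prod.fst) : L ≠ [] :=
      fun h => hP (List.map_eq_nil_iff.1 (by rw [← hL, h, List.map_nil]))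
    exact ⟨_, ⟨Q, ne_nil hQ, mem_S hQ, hQa, rfl⟩, _, ⟨R, ne_nil hR, mem_S hR, hRb, rfl⟩,
      hsum.symm⟩
  · rintro ⟨_, ⟨P, hP, hPS, ha, rfl⟩, _, ⟨Q, hQ, hQS, hb, rfl⟩, rfl⟩
    refine ⟨P ++ Q, by simp [hP], fun p hp => ?_, ?_, by simp [evalSum]⟩
    · exact (List.mem_append.1 hp).elim (hPS p) (hQS p)
    · rw [List.map_append]
      exact lsum_append (by simpa using hP) (by simpa using hQ) ha hb hab

lemma isSignedMeasure_supMeasure (hRDP : RDP E) {S : Set (E → ℝ)}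
    (hS : ∀ t ∈ S, IsSignedMeasure t) (hne : S.Nonempty)
    (hbdd : ∀ a, BddAbove (decompSums S a)) : IsSignedMeasure (supMeasure S) := by
  obtain ⟨t, ht⟩ := hne
  have hne' (a : E) : (decompSums S a).Nonempty := ⟨t a, apply_mem_decompSums ht a⟩
  intro a b c hab
  rw [supMeasure, decompSums_eq_add hRDP hS hab, csSup_add (hne' a) (hbdd a) (hne' b) (hbdd b)]
  rfl

theorem isSupIn_supMeasure (hRDP : RDP E) {S : Set (E → ℝ)} (hS : ∀ t ∈ S, IsJordan t)
    (hne : S.Nonempty) {b : E → ℝ} (hb : IsJordan b) (hSb : ∀ t ∈ S, MLe t b) :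
    IsSupIn S (supMeasure S) := by
  have hSm (t) (ht : t ∈ S) : IsSignedMeasure t := (hS t ht).isSignedMeasure
  have hbdd (a : E) : BddAbove (decompSums S a) :=
    ⟨b a, fun _ => le_of_mem_decompSums hb.isSignedMeasure hSb⟩
  have hv : IsSignedMeasure (supMeasure S) := isSignedMeasure_supMeasure hRDP hSm hne hbdd
  have hub (t) (ht : t ∈ S) : MLe t (supMeasure S) :=
    mLe_of_le (hSm t ht) hv fun a => le_csSup (hbdd a) (apply_mem_decompSums ht a)
  obtain ⟨t, ht⟩ := hne
  refine ⟨sub_add_cancel (supMeasure S) t ▸ (hub t ht).isJordan.add (hS t ht), hub,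
    fun h hh hSh => mLe_of_le hv hh.isSignedMeasure fun a => ?_⟩
  exact csSup_le ⟨t a, apply_mem_decompSums ht a⟩ fun _ =>
    le_of_mem_decompSums hh.isSignedMeasure hSh

theorem exists_isSupIn_pair (hRDP : RDP E) {m₁ m₂ : E → ℝ} (h₁ : IsJordan m₁)
    (h₂ : IsJordan m₂) : ∃ v, IsSupIn {m₁, m₂} v := by
  obtain ⟨p₁, hp₁, hm₁⟩ := h₁.exists_isMeasure_mLe
  obtain ⟨p₂, hp₂, hm₂⟩ := h₂.exists_isMeasure_mLe
  refine ⟨_, isSupIn_supMeasure hRDP (by rintro t (rfl | rfl) <;> assumption)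
    (Set.insert_nonempty _ _) (hp₁.add hp₂).isJordan ?_⟩
  rintro t (rfl | rfl)
  exacts [hm₁.trans (mLe_add_right hp₂), hm₂.trans (mLe_add_left hp₁)]

end Supremum

section Infimum

theorem IsSupIn.neg {S : Set (E → ℝ)} {v : E → ℝ} (hv : IsSupIn (-S) v) : IsInfIn S (-v) := by
  obtain ⟨hvJ, hub, hlub⟩ := hv
  refine ⟨hvJ.neg, fun t ht => mLe_neg_left.2 (hub (-t) (by simpa using ht)),
    fun h hh hSh => mLe_neg_right.2 (hlub (-h) hh.neg fun t ht => ?_)⟩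
  exact mLe_neg_right.2 (hSh (-t) ht)

theorem exists_isInfIn (hRDP : RDP E) {S : Set (E → ℝ)} (hS : ∀ t ∈ S, IsJordan t)
    (hne : S.Nonempty) (hbdd : ∃ b, IsJordan b ∧ ∀ t ∈ S, MLe b t) : ∃ w, IsInfIn S w := by
  obtain ⟨b, hb, hbS⟩ := hbdd
  have hS' (t) (ht : t ∈ -S) : IsJordan t := neg_neg t ▸ (hS (-t) ht).neg
  exact ⟨_, (isSupIn_supMeasure hRDP hS' hne.neg hb.neg
    fun t ht => mLe_neg_right.2 (hbS (-t) ht)).neg⟩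

theorem exists_isInfIn_pair (hRDP : RDP E) {m₁ m₂ : E → ℝ} (h₁ : IsJordan m₁)
    (h₂ : IsJordan m₂) : ∃ w, IsInfIn {m₁, m₂} w := by
  obtain ⟨v, hv⟩ := exists_isSupIn_pair hRDP h₁.neg h₂.neg
  exact ⟨-v, IsSupIn.neg (by rwa [Set.neg_insert, Set.neg_singleton])⟩

end Infimum

/-- Theorem 3.4(a): for a pseudo effect algebra with (RDP), the
group `J(E)` of Jordan signed measures, ordered by `≤⁺`, is an abelian Dedekind
complete lattice-ordered group: it is a (automatically abelian) group, any two
elements have a supremum and an infimum, every nonempty subset bounded above has a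
supremum in `J(E)`, and every nonempty subset bounded below has an infimum. -/
theorem stmt4 (hRDP : RDP E) :
    (∀ m₁ m₂ : E → ℝ, IsJordan m₁ → IsJordan m₂ → IsJordan (m₁ + m₂)) ∧
    (∀ m : E → ℝ, IsJordan m → IsJordan (-m)) ∧
    (∀ m₁ m₂ : E → ℝ, IsJordan m₁ → IsJordan m₂ →
      (∃ v, IsSupIn {m₁, m₂} v) ∧ (∃ w, IsInfIn {m₁, m₂} w)) ∧
    (∀ S : Set (E → ℝ), (∀ t ∈ S, IsJordan t) → S.Nonempty →
      (∃ b, IsJordan b ∧ ∀ t ∈ S, MLe t b) → ∃ v, IsSupIn S v) ∧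
    (∀ S : Set (E → ℝ), (∀ t ∈ S, IsJordan t) → S.Nonempty →
      (∃ b, IsJordan b ∧ ∀ t ∈ S, MLe b t) → ∃ w, IsInfIn S w) :=
  ⟨fun _ _ => IsJordan.add, fun _ => IsJordan.neg,
    fun _ _ h₁ h₂ => ⟨exists_isSupIn_pair hRDP h₁ h₂, exists_isInfIn_pair hRDP h₁ h₂⟩,
    fun _ hS hne ⟨_, hb, hSb⟩ => ⟨_, isSupIn_supMeasure hRDP hS hne hb hSb⟩,
    fun _ hS hne hbdd => exists_isInfIn hRDP hS hne hbdd⟩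

end PseudoEffectAlgebra
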